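/- Let g : ℝ → ℝ be non-decreasing and continuous with g(−1−γ) + G > 0 and g(1+γ) − G < 0 for some G ≥ 0, and let ℓ be any loss with values in [0,∞). For w ∈ ℝ^d with ‖w‖ = 1 and |b| ≤ G, write f_{w,b} for the function x ↦ g(w·x) + b in H_g. Then ℓ is H_g-calibrated with respect to the adversarial 0/1 loss ℓ_γ if and only if for every x ∈ X the following three conditions hold (all infima in the extended reals, with inf over the empty set equal to +∞): (i) inf{ C_ℓ(f_{w,b}, x, 1/2) : ‖w‖=1, |b|≤G, g(w·x − γ) + b ≤ 0 ≤ g(w·x + γ) + b } > inf{ C_ℓ(f, x, 1/2) : f ∈ H_g }; (ii) for every η ∈ (1/2, 1], inf{ C_ℓ(f_{w,b}, x, η) : ‖w‖=1, |b|≤G, g(w·x − γ) + b ≤ 0 } > inf{ C_ℓ(f, x, η) : f ∈ H_g }; (iii) for every η ∈ [0, 1/2), inf{ C_ℓ(f_{w,b}, x, η) : ‖w‖=1, |b|≤G, g(w·x + γ) + b ≥ 0 } > inf{ C_ℓ(f, x, η) : f ∈ H_g }. -/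

import Mathlib

/-!
For `f = g(⟪w, ·⟫) + b` with `‖w‖ = 1`, the inner product `⟪w, x'⟫` sweeps exactly the interval
`[⟪w, x⟫ - γ, ⟪w, x⟫ + γ]` as `x'` ranges over the `γ`-ball around `x`, so by monotonicity of `g`
the adversarial 0/1 loss only sees the two endpoint values `g(⟪w, x⟫ ∓ γ) + b`, and at least one
of the two labels is attacked. The adversarial inner risk therefore takes only the values
`η`, `1 - η`, `1`; its minimum over `H_g` is `min η (1 - η)`, attained at `b = -G` and `b = G`,
and the strictly suboptimal hypotheses are exactly the sets in (i)–(iii).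
Because the target risk takes finitely many values, an `ε`-optimal hypothesis is optimal once
`ε` is small, so calibration at `(x, η)` amounts to a uniform gap between the `ℓ`-risk of the
suboptimal hypotheses and the minimal `ℓ`-risk, i.e. to the strict inequality of infima.
-/

open scoped RealInnerProductSpace

noncomputable section

/-- A loss assigns a value to a predictor `f`, a point `x`, and a label `y` (±1). -/
abbrev Loss (d : ℕ) := ((EuclideanSpace ℝ (Fin d)) → ℝ) → (EuclideanSpace ℝ (Fin d)) → ℝ → ℝ

variable {d : ℕ}

/-- The inner (conditional) ℓ-risk. -/
def innerRisk (ℓ : Loss d) (f : EuclideanSpace ℝ (Fin d) → ℝ)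
    (x : EuclideanSpace ℝ (Fin d)) (η : ℝ) : ℝ :=
  η * ℓ f x 1 + (1 - η) * ℓ f x (-1)

/-- The minimal inner ℓ-risk over a hypothesis set `H`. -/
def minInnerRisk (ℓ : Loss d) (H : Set (EuclideanSpace ℝ (Fin d) → ℝ))
    (x : EuclideanSpace ℝ (Fin d)) (η : ℝ) : ℝ :=
  ⨅ f : H, innerRisk ℓ f x η

/-- ℓ₁ is H-calibrated with respect to ℓ₂. -/
def Calibrated (H : Set (EuclideanSpace ℝ (Fin d) → ℝ)) (ℓ₁ ℓ₂ : Loss d) : Prop :=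
  ∀ ε > (0:ℝ), ∀ η ∈ Set.Icc (0:ℝ) 1, ∀ x : EuclideanSpace ℝ (Fin d), ‖x‖ ≤ 1 →
    ∃ δ > (0:ℝ), ∀ f ∈ H,
      innerRisk ℓ₁ f x η < minInnerRisk ℓ₁ H x η + δ →
      innerRisk ℓ₂ f x η < minInnerRisk ℓ₂ H x η + ε

/-- The adversarial 0/1 loss with perturbation radius γ. -/
def advLoss (γ : ℝ) : Loss d := fun f x y =>
  ⨆ x' : Metric.closedBall x γ, (if y * f ↑x' ≤ 0 then (1:ℝ) else 0)

/-- A margin-based loss viewed as a loss. -/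
def marginLoss (φ : ℝ → ℝ) : Loss d := fun f x y => φ (y * f x)

/-- The supremum-based surrogate of a margin-based loss. -/
def supLoss (γ : ℝ) (φ : ℝ → ℝ) : Loss d := fun f x y =>
  ⨆ x' : Metric.closedBall x γ, φ (y * f ↑x')

/-- Infimum of f over the closed γ-ball around x. -/
def infBall (γ : ℝ) (f : EuclideanSpace ℝ (Fin d) → ℝ) (x : EuclideanSpace ℝ (Fin d)) : ℝ :=
  ⨅ x' : Metric.closedBall x γ, f ↑x'

/-- Supremum of f over the closed γ-ball around x. -/
def supBall (γ : ℝ) (f : EuclideanSpace ℝ (Fin d) → ℝ) (x : EuclideanSpace ℝ (Fin d)) : ℝ :=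
  ⨆ x' : Metric.closedBall x γ, f ↑x'

/-- x is a distinguishing point for H. -/
def Distinguishing (γ : ℝ) (H : Set (EuclideanSpace ℝ (Fin d) → ℝ))
    (x : EuclideanSpace ℝ (Fin d)) : Prop :=
  ‖x‖ ≤ 1 ∧ (∃ f ∈ H, 0 < infBall γ f x) ∧ (∃ g ∈ H, supBall γ g x < 0)

/-- H is regular for adversarial calibration. -/
def RegularAdv (γ : ℝ) (H : Set (EuclideanSpace ℝ (Fin d) → ℝ)) : Prop :=
  ∃ x, Distinguishing γ H x

/-- H is symmetric. -/
def SymmetricH (H : Set (EuclideanSpace ℝ (Fin d) → ℝ)) : Prop :=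
  ∀ f ∈ H, -f ∈ H

/-- Linear hypothesis set. -/
def Hlin (d : ℕ) : Set (EuclideanSpace ℝ (Fin d) → ℝ) :=
  { f | ∃ w : EuclideanSpace ℝ (Fin d), ‖w‖ = 1 ∧ f = fun x => (inner ℝ w x : ℝ) }

/-- Generalized linear hypothesis set. -/
def Hg (d : ℕ) (g : ℝ → ℝ) (G : ℝ) : Set (EuclideanSpace ℝ (Fin d) → ℝ) :=
  { f | ∃ (w : EuclideanSpace ℝ (Fin d)) (b : ℝ), ‖w‖ = 1 ∧ |b| ≤ G ∧
      f = fun x => g (inner ℝ w x : ℝ) + b }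

/-- ReLU-based hypothesis set. -/
def Hrelu (d : ℕ) (G : ℝ) : Set (EuclideanSpace ℝ (Fin d) → ℝ) :=
  Hg d (fun t => max t 0) G

/-- One-layer ReLU neural network hypothesis set. -/
def Hnn (d n : ℕ) (Λ W : ℝ) : Set (EuclideanSpace ℝ (Fin d) → ℝ) :=
  { f | ∃ (u : Fin n → ℝ) (w : Fin n → EuclideanSpace ℝ (Fin d)),
      (∑ j, |u j|) ≤ Λ ∧ (∀ j, ‖w j‖ ≤ W) ∧
      f = fun x => ∑ j, u j * max (inner ℝ (w j) x : ℝ) 0 }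

/-- All (Borel) measurable functions. -/
def Hall (d : ℕ) : Set (EuclideanSpace ℝ (Fin d) → ℝ) :=
  { f | Measurable f }

/-- The ρ-margin loss. -/
def phiRho (ρ t : ℝ) : ℝ := min 1 (max 0 (1 - t / ρ))


/-- Infimum (in the extended reals, inf ∅ = +∞) of the inner ℓ-risk over a set of functions. -/
def infRiskE (ℓ : Loss d) (S : Set (EuclideanSpace ℝ (Fin d) → ℝ))
    (x : EuclideanSpace ℝ (Fin d)) (η : ℝ) : EReal :=
  sInf ((fun f => ((innerRisk ℓ f x η : ℝ) : EReal)) '' S)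

open Set

lemma Set.Finite.exists_pos_add_le_of_lt {s : Set ℝ} (hs : s.Finite) (a : ℝ) :
    ∃ ε > 0, ∀ t ∈ s, a < t → a + ε ≤ t := by
  obtain ⟨ε, hε, hball⟩ := Metric.isOpen_iff.1 (hs.inter_of_left (Ioi a)).isClosed.isOpen_compl a
    (fun h => lt_irrefl a h.2)
  refine ⟨ε, hε, fun t ht hat => not_lt.1 fun hlt => hball ?_ ⟨ht, hat⟩⟩
  rw [Real.ball_eq_Ioo]
  exact ⟨by linarith, hlt⟩

lemma EReal.coe_lt_sInf_image_coe_iff {α : Type*} {S : Set α} {F : α → ℝ} {M : ℝ} :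
    (M : EReal) < sInf ((fun a => (F a : EReal)) '' S) ↔ ∃ δ > 0, ∀ a ∈ S, M + δ ≤ F a := by
  constructor
  · intro h
    obtain ⟨r, hMr, hr⟩ := EReal.lt_iff_exists_real_btwn.1 h
    refine ⟨r - M, by linarith [EReal.coe_lt_coe_iff.1 hMr], fun a ha => ?_⟩
    have : (r : EReal) ≤ F a := hr.le.trans (sInf_le ⟨a, ha, rfl⟩)
    linarith [EReal.coe_le_coe_iff.1 this]
  · rintro ⟨δ, hδ, h⟩
    calc (M : EReal) < ((M + δ : ℝ) : EReal) := EReal.coe_lt_coe_iff.2 (by linarith)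
      _ ≤ _ := le_sInf (by rintro _ ⟨a, ha, rfl⟩; exact EReal.coe_le_coe_iff.2 (h a ha))

lemma iSup_ite_one_zero {ι : Type*} (p : ι → Prop) [DecidablePred p]
    [Decidable (∃ i, p i)] :
    (⨆ i, if p i then (1 : ℝ) else 0) = if ∃ i, p i then 1 else 0 := by
  split_ifs with h
  · obtain ⟨i, hi⟩ := h
    have : Nonempty ι := ⟨i⟩
    have hbdd : BddAbove (range fun i => if p i then (1 : ℝ) else 0) :=
      ⟨1, by rintro _ ⟨j, rfl⟩; dsimp only; split_ifs <;> norm_num⟩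
    exact le_antisymm (ciSup_le fun j => by split_ifs <;> norm_num)
      (le_ciSup_of_le hbdd i (by rw [if_pos hi]))
  · push Not at h
    simp [h]

lemma Monotone.exists_mem_Icc_le_iff {α β : Type*} [Preorder α] [Preorder β] {f : α → β}
    (hf : Monotone f) {a b : α} (hab : a ≤ b) (c : β) :
    (∃ t ∈ Icc a b, f t ≤ c) ↔ f a ≤ c :=
  ⟨fun ⟨_, ht, hle⟩ => (hf ht.1).trans hle, fun h => ⟨a, left_mem_Icc.2 hab, h⟩⟩

lemma Monotone.exists_mem_Icc_ge_iff {α β : Type*} [Preorder α] [Preorder β] {f : α → β}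
    (hf : Monotone f) {a b : α} (hab : a ≤ b) (c : β) :
    (∃ t ∈ Icc a b, c ≤ f t) ↔ c ≤ f b :=
  ⟨fun ⟨_, ht, hle⟩ => hle.trans (hf ht.2), fun h => ⟨b, right_mem_Icc.2 hab, h⟩⟩

lemma forall_mem_Icc_zero_one_iff {P : ℝ → Prop} :
    (∀ η ∈ Icc (0 : ℝ) 1, P η) ↔
      P (1 / 2) ∧ (∀ η, 1 / 2 < η → η ≤ 1 → P η) ∧ (∀ η, 0 ≤ η → η < 1 / 2 → P η) := by
  refine ⟨fun h => ⟨h _ ⟨by norm_num, by norm_num⟩, fun η h1 h2 => h η ⟨by linarith, h2⟩,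
    fun η h0 h1 => h η ⟨h0, by linarith⟩⟩, fun ⟨hhalf, hgt, hlt⟩ η hη => ?_⟩
  rcases lt_trichotomy η (1 / 2) with h | rfl | h
  exacts [hlt η hη.1 h, hhalf, hgt η h hη.2]

section TwoEvents

variable {A B : Prop} [Decidable A] [Decidable B] {η : ℝ}

lemma min_le_two_event_risk (hAB : A ∨ B) :
    min η (1 - η) ≤ η * (if A then 1 else 0) + (1 - η) * (if B then 1 else 0) := by
  have := min_le_left η (1 - η)
  have := min_le_right η (1 - η)
  split_ifs <;> first | tauto | linarith

lemma half_lt_two_event_risk_iff (hAB : A ∨ B) :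
    min (1 / 2 : ℝ) (1 - 1 / 2) <
        1 / 2 * (if A then 1 else 0) + (1 - 1 / 2) * (if B then 1 else 0) ↔ A ∧ B := by
  split_ifs <;> norm_num <;> tauto

lemma min_lt_two_event_risk_iff_of_half_lt (hAB : A ∨ B) (hη : 1 / 2 < η) :
    min η (1 - η) < η * (if A then 1 else 0) + (1 - η) * (if B then 1 else 0) ↔ A := by
  rw [min_eq_right (by linarith)]
  by_cases hA : A <;> by_cases hB : B <;> simp [hA, hB] <;> first | tauto | linarith

lemma min_lt_two_event_risk_iff_of_lt_half (hAB : A ∨ B) (hη : η < 1 / 2) :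
    min η (1 - η) < η * (if A then 1 else 0) + (1 - η) * (if B then 1 else 0) ↔ B := by
  rw [min_eq_left (by linarith)]
  by_cases hA : A <;> by_cases hB : B <;> simp [hA, hB] <;> first | tauto | linarith

end TwoEvents

lemma exists_norm_eq_one (hd : 1 ≤ d) : ∃ w : EuclideanSpace ℝ (Fin d), ‖w‖ = 1 :=
  ⟨EuclideanSpace.single ⟨0, hd⟩ 1, by simp⟩

lemma image_inner_closedBall {E : Type*} [NormedAddCommGroup E] [InnerProductSpace ℝ E]
    {w : E} (hw : ‖w‖ = 1) (x : E) (γ : ℝ) :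
    (fun y => ⟪w, y⟫) '' Metric.closedBall x γ = Icc (⟪w, x⟫ - γ) (⟪w, x⟫ + γ) := by
  ext t
  constructor
  · rintro ⟨y, hy, rfl⟩
    have h : |⟪w, y⟫ - ⟪w, x⟫| ≤ γ := by
      rw [← inner_sub_right]
      refine (abs_real_inner_le_norm w (y - x)).trans ?_
      rwa [hw, one_mul, ← dist_eq_norm]
    constructor <;> linarith [abs_sub_le_iff.1 h]
  · intro ht
    refine ⟨x + (t - ⟪w, x⟫) • w, ?_, ?_⟩
    · rw [Metric.mem_closedBall, dist_eq_norm, add_sub_cancel_left, norm_smul, hw, mul_one,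
        Real.norm_eq_abs, abs_sub_le_iff]
      constructor <;> linarith [ht.1, ht.2]
    · simp [inner_add_right, real_inner_smul_right, hw]

section Calibration

def CalibratedAt (H : Set (EuclideanSpace ℝ (Fin d) → ℝ)) (ℓ₁ ℓ₂ : Loss d)
    (x : EuclideanSpace ℝ (Fin d)) (η : ℝ) : Prop :=
  ∀ ε > (0 : ℝ), ∃ δ > (0 : ℝ), ∀ f ∈ H,
    innerRisk ℓ₁ f x η < minInnerRisk ℓ₁ H x η + δ →
    innerRisk ℓ₂ f x η < minInnerRisk ℓ₂ H x η + ε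

def suboptimalSet (ℓ : Loss d) (H : Set (EuclideanSpace ℝ (Fin d) → ℝ))
    (x : EuclideanSpace ℝ (Fin d)) (η : ℝ) : Set (EuclideanSpace ℝ (Fin d) → ℝ) :=
  {f ∈ H | minInnerRisk ℓ H x η < innerRisk ℓ f x η}

variable {H : Set (EuclideanSpace ℝ (Fin d) → ℝ)} {ℓ ℓ₁ ℓ₂ : Loss d}
  {x : EuclideanSpace ℝ (Fin d)} {η : ℝ}

lemma calibrated_iff_forall_calibratedAt :
    Calibrated H ℓ₁ ℓ₂ ↔ ∀ x, ‖x‖ ≤ 1 → ∀ η ∈ Icc (0 : ℝ) 1, CalibratedAt H ℓ₁ ℓ₂ x η :=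
  ⟨fun h x hx η hη ε hε => h ε hε η hη x hx, fun h ε hε η hη x hx => h x hx η hη ε hε⟩

lemma calibratedAt_iff_exists_gap (hfin : ((fun f => innerRisk ℓ₂ f x η) '' H).Finite) :
    CalibratedAt H ℓ₁ ℓ₂ x η ↔ ∃ δ > 0, ∀ f ∈ suboptimalSet ℓ₂ H x η,
      minInnerRisk ℓ₁ H x η + δ ≤ innerRisk ℓ₁ f x η := by
  constructor
  · intro h
    obtain ⟨ε, hε, hgap⟩ := hfin.exists_pos_add_le_of_lt (minInnerRisk ℓ₂ H x η)
    obtain ⟨δ, hδ, hcal⟩ := h ε hε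
    refine ⟨δ, hδ, fun f ⟨hf, hsub⟩ => not_lt.1 fun hlt => ?_⟩
    exact (hcal f hf hlt).not_ge (hgap _ ⟨f, hf, rfl⟩ hsub)
  · rintro ⟨δ, hδ, hgap⟩ ε hε
    refine ⟨δ, hδ, fun f hf hlt => ?_⟩
    have : ¬ minInnerRisk ℓ₂ H x η < innerRisk ℓ₂ f x η := fun hsub =>
      hlt.not_ge (hgap f ⟨hf, hsub⟩)
    linarith [not_lt.1 this]

lemma infRiskE_eq_minInnerRisk (hne : H.Nonempty)
    (hbdd : BddBelow ((fun f => innerRisk ℓ f x η) '' H)) :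
    infRiskE ℓ H x η = minInnerRisk ℓ H x η := by
  have : Nonempty H := hne.to_subtype
  rw [infRiskE, sInf_image', minInnerRisk, Monotone.map_ciInf_of_continuousAt
    continuous_coe_real_ereal.continuousAt EReal.coe_strictMono.monotone
    (by rwa [image_eq_range] at hbdd)]

lemma calibratedAt_iff_infRiskE_lt (hne : H.Nonempty)
    (hbdd : BddBelow ((fun f => innerRisk ℓ₁ f x η) '' H))
    (hfin : ((fun f => innerRisk ℓ₂ f x η) '' H).Finite) :
    CalibratedAt H ℓ₁ ℓ₂ x η ↔
      infRiskE ℓ₁ H x η < infRiskE ℓ₁ (suboptimalSet ℓ₂ H x η) x η := by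
  rw [calibratedAt_iff_exists_gap hfin, infRiskE_eq_minInnerRisk hne hbdd, infRiskE,
    EReal.coe_lt_sInf_image_coe_iff]

end Calibration

section Adversarial

variable {γ : ℝ} {g : ℝ → ℝ} {G : ℝ}

open Classical in
lemma advLoss_eq_ite (f : EuclideanSpace ℝ (Fin d) → ℝ) (x : EuclideanSpace ℝ (Fin d)) (y : ℝ) :
    advLoss γ f x y = if ∃ x' ∈ Metric.closedBall x γ, y * f x' ≤ 0 then 1 else 0 := by
  rw [advLoss, iSup_ite_one_zero]
  exact if_congr (by simp only [Subtype.exists, exists_prop]) rfl rfl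

lemma finite_image_innerRisk_advLoss (H : Set (EuclideanSpace ℝ (Fin d) → ℝ))
    (x : EuclideanSpace ℝ (Fin d)) (η : ℝ) :
    ((fun f => innerRisk (advLoss γ) f x η) '' H).Finite := by
  have h01 : ∀ f y, advLoss γ f x y ∈ ({0, 1} : Set ℝ) := fun f y => by
    rw [advLoss_eq_ite]
    split_ifs <;> simp
  refine ((toFinite ({0, 1} ×ˢ {0, 1} : Set (ℝ × ℝ))).image
    fun p => η * p.1 + (1 - η) * p.2).subset ?_
  rintro _ ⟨f, -, rfl⟩
  exact ⟨(advLoss γ f x 1, advLoss γ f x (-1)), ⟨h01 f 1, h01 f (-1)⟩, rfl⟩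

lemma advLoss_glm_one (hγ : 0 ≤ γ) (hg : Monotone g) {w : EuclideanSpace ℝ (Fin d)}
    (hw : ‖w‖ = 1) (b : ℝ) (x : EuclideanSpace ℝ (Fin d)) :
    advLoss γ (fun x' => g ⟪w, x'⟫ + b) x 1 = if g (⟪w, x⟫ - γ) + b ≤ 0 then 1 else 0 := by
  classical
  rw [advLoss_eq_ite]
  refine if_congr ?_ rfl rfl
  calc (∃ x' ∈ Metric.closedBall x γ, 1 * (g ⟪w, x'⟫ + b) ≤ 0)
      ↔ ∃ t ∈ (fun y => ⟪w, y⟫) '' Metric.closedBall x γ, g t + b ≤ 0 := by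
        simp only [one_mul, exists_mem_image]
    _ ↔ _ := by
        rw [image_inner_closedBall hw]
        exact (hg.add_const b).exists_mem_Icc_le_iff (by linarith) 0

lemma advLoss_glm_neg_one (hγ : 0 ≤ γ) (hg : Monotone g) {w : EuclideanSpace ℝ (Fin d)}
    (hw : ‖w‖ = 1) (b : ℝ) (x : EuclideanSpace ℝ (Fin d)) :
    advLoss γ (fun x' => g ⟪w, x'⟫ + b) x (-1) = if 0 ≤ g (⟪w, x⟫ + γ) + b then 1 else 0 := by
  classical
  rw [advLoss_eq_ite]
  refine if_congr ?_ rfl rfl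
  calc (∃ x' ∈ Metric.closedBall x γ, -1 * (g ⟪w, x'⟫ + b) ≤ 0)
      ↔ ∃ t ∈ (fun y => ⟪w, y⟫) '' Metric.closedBall x γ, 0 ≤ g t + b := by
        simp only [neg_one_mul, neg_nonpos, exists_mem_image]
    _ ↔ _ := by
        rw [image_inner_closedBall hw]
        exact (hg.add_const b).exists_mem_Icc_ge_iff (by linarith) 0

lemma innerRisk_advLoss_glm (hγ : 0 ≤ γ) (hg : Monotone g) {w : EuclideanSpace ℝ (Fin d)}
    (hw : ‖w‖ = 1) (b : ℝ) (x : EuclideanSpace ℝ (Fin d)) (η : ℝ) :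
    innerRisk (advLoss γ) (fun x' => g ⟪w, x'⟫ + b) x η =
      η * (if g (⟪w, x⟫ - γ) + b ≤ 0 then 1 else 0) +
        (1 - η) * (if 0 ≤ g (⟪w, x⟫ + γ) + b then 1 else 0) := by
  rw [innerRisk, advLoss_glm_one hγ hg hw, advLoss_glm_neg_one hγ hg hw]

lemma Monotone.sub_add_nonpos_or_add_add_nonneg (hg : Monotone g) (hγ : 0 ≤ γ) (t b : ℝ) :
    g (t - γ) + b ≤ 0 ∨ 0 ≤ g (t + γ) + b := by
  rcases le_or_gt (g (t - γ) + b) 0 with h | h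
  · exact Or.inl h
  · exact Or.inr (by linarith [hg (show t - γ ≤ t + γ by linarith)])

lemma minInnerRisk_advLoss_Hg {x : EuclideanSpace ℝ (Fin d)} {η : ℝ} (hd : 1 ≤ d)
    (hγ : 0 ≤ γ) (hg : Monotone g) (hG : 0 ≤ G) (hg1 : 0 < g (-1 - γ) + G)
    (hg2 : g (1 + γ) - G < 0) (hx : ‖x‖ ≤ 1) :
    minInnerRisk (advLoss γ) (Hg d g G) x η = min η (1 - η) := by
  obtain ⟨w, hw⟩ := exists_norm_eq_one hd
  have hwx : |⟪w, x⟫| ≤ 1 := (abs_real_inner_le_norm w x).trans (by rwa [hw, one_mul])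
  have hlo := hg (show -1 - γ ≤ ⟪w, x⟫ - γ by linarith [abs_le.1 hwx])
  have hhi := hg (show ⟪w, x⟫ + γ ≤ 1 + γ by linarith [abs_le.1 hwx])
  have hmid := hg (show ⟪w, x⟫ - γ ≤ ⟪w, x⟫ + γ by linarith)
  have risk_pos : innerRisk (advLoss γ) (fun x' => g ⟪w, x'⟫ + G) x η = 1 - η := by
    rw [innerRisk_advLoss_glm hγ hg hw, if_neg (by linarith), if_pos (by linarith)]
    ring
  have risk_neg : innerRisk (advLoss γ) (fun x' => g ⟪w, x'⟫ + -G) x η = η := by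
    rw [innerRisk_advLoss_glm hγ hg hw, if_pos (by linarith), if_neg (by linarith)]
    ring
  refine IsLeast.csInf_eq ⟨?_, ?_⟩
  · rcases min_choice η (1 - η) with h | h <;> rw [h]
    · exact ⟨⟨_, w, -G, hw, by rw [abs_neg, abs_of_nonneg hG], rfl⟩, risk_neg⟩
    · exact ⟨⟨_, w, G, hw, (abs_of_nonneg hG).le, rfl⟩, risk_pos⟩
  · rintro _ ⟨⟨f, w', b, hw', -, rfl⟩, rfl⟩
    dsimp only
    rw [innerRisk_advLoss_glm hγ hg hw']
    exact min_le_two_event_risk (hg.sub_add_nonpos_or_add_add_nonneg hγ _ b)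

lemma setOf_Hg_min_lt_innerRisk_advLoss_eq {x : EuclideanSpace ℝ (Fin d)} {η : ℝ}
    (hγ : 0 ≤ γ) (hg : Monotone g) {C : EuclideanSpace ℝ (Fin d) → ℝ → Prop}
    (hC : ∀ w b, min η (1 - η) < η * (if g (⟪w, x⟫ - γ) + b ≤ 0 then 1 else 0) +
      (1 - η) * (if 0 ≤ g (⟪w, x⟫ + γ) + b then 1 else 0) ↔ C w b) :
    {f ∈ Hg d g G | min η (1 - η) < innerRisk (advLoss γ) f x η} =
      {f | ∃ w b, ‖w‖ = 1 ∧ |b| ≤ G ∧ f = (fun x' => g ⟪w, x'⟫ + b) ∧ C w b} := by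
  ext f
  constructor
  · rintro ⟨⟨w, b, hw, hb, rfl⟩, hlt⟩
    rw [innerRisk_advLoss_glm hγ hg hw] at hlt
    exact ⟨w, b, hw, hb, rfl, (hC w b).1 hlt⟩
  · rintro ⟨w, b, hw, hb, rfl, hc⟩
    refine ⟨⟨w, b, hw, hb, rfl⟩, ?_⟩
    rw [innerRisk_advLoss_glm hγ hg hw]
    exact (hC w b).2 hc

lemma calibratedAt_Hg_advLoss_iff {x : EuclideanSpace ℝ (Fin d)} {η : ℝ} (hd : 1 ≤ d)
    (hγ : 0 ≤ γ) (hg : Monotone g) (hG : 0 ≤ G) (hg1 : 0 < g (-1 - γ) + G)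
    (hg2 : g (1 + γ) - G < 0) {ℓ : Loss d} (hl₁ : ∀ f, 0 ≤ ℓ f x 1) (hl₂ : ∀ f, 0 ≤ ℓ f x (-1))
    (hx : ‖x‖ ≤ 1) (hη : η ∈ Icc (0 : ℝ) 1) :
    CalibratedAt (Hg d g G) ℓ (advLoss γ) x η ↔
      infRiskE ℓ (Hg d g G) x η <
        infRiskE ℓ {f ∈ Hg d g G | min η (1 - η) < innerRisk (advLoss γ) f x η} x η := by
  obtain ⟨w, hw⟩ := exists_norm_eq_one hd
  have hne : (Hg d g G).Nonempty := ⟨_, w, G, hw, (abs_of_nonneg hG).le, rfl⟩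
  have hbdd : BddBelow ((fun f => innerRisk ℓ f x η) '' Hg d g G) := ⟨0, by
    rintro _ ⟨f, -, rfl⟩
    exact add_nonneg (mul_nonneg hη.1 (hl₁ f)) (mul_nonneg (sub_nonneg.2 hη.2) (hl₂ f))⟩
  rw [calibratedAt_iff_infRiskE_lt hne hbdd (finite_image_innerRisk_advLoss _ x η),
    suboptimalSet, minInnerRisk_advLoss_Hg hd hγ hg hG hg1 hg2 hx]

end Adversarial

theorem stmt18_general (d : ℕ) (hd : 1 ≤ d) (γ : ℝ) (hγ0 : 0 < γ)
    (g : ℝ → ℝ) (hgmono : Monotone g)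
    (G : ℝ) (hG : 0 ≤ G) (hg1 : 0 < g (-1 - γ) + G) (hg2 : g (1 + γ) - G < 0)
    (ℓ : Loss d) (hl : ∀ (f : EuclideanSpace ℝ (Fin d) → ℝ) (x : EuclideanSpace ℝ (Fin d)), ‖x‖ ≤ 1 → ∀ y : ℝ, y = 1 ∨ y = -1 → 0 ≤ ℓ f x y) :
    Calibrated (Hg d g G) ℓ (advLoss γ) ↔
      ∀ x : EuclideanSpace ℝ (Fin d), ‖x‖ ≤ 1 →
        (infRiskE ℓ (Hg d g G) x (1/2) <
          infRiskE ℓ { f | ∃ (w : EuclideanSpace ℝ (Fin d)) (b : ℝ),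
            ‖w‖ = 1 ∧ |b| ≤ G ∧ f = (fun x' => g (inner ℝ w x' : ℝ) + b) ∧
            g ((inner ℝ w x : ℝ) - γ) + b ≤ 0 ∧ 0 ≤ g ((inner ℝ w x : ℝ) + γ) + b } x (1/2)) ∧
        (∀ η : ℝ, 1/2 < η → η ≤ 1 →
          infRiskE ℓ (Hg d g G) x η <
            infRiskE ℓ { f | ∃ (w : EuclideanSpace ℝ (Fin d)) (b : ℝ),
              ‖w‖ = 1 ∧ |b| ≤ G ∧ f = (fun x' => g (inner ℝ w x' : ℝ) + b) ∧
              g ((inner ℝ w x : ℝ) - γ) + b ≤ 0 } x η) ∧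
        (∀ η : ℝ, 0 ≤ η → η < 1/2 →
          infRiskE ℓ (Hg d g G) x η <
            infRiskE ℓ { f | ∃ (w : EuclideanSpace ℝ (Fin d)) (b : ℝ),
              ‖w‖ = 1 ∧ |b| ≤ G ∧ f = (fun x' => g (inner ℝ w x' : ℝ) + b) ∧
              0 ≤ g ((inner ℝ w x : ℝ) + γ) + b } x η) := by
  rw [calibrated_iff_forall_calibratedAt]
  refine forall₂_congr fun x hx => ?_
  have key η (hη : η ∈ Icc (0 : ℝ) 1) :=
    calibratedAt_Hg_advLoss_iff hd hγ0.le hgmono hG hg1 hg2 (fun f => hl f x hx 1 (.inl rfl))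
      (fun f => hl f x hx (-1) (.inr rfl)) hx hη
  have hAB := hgmono.sub_add_nonpos_or_add_add_nonneg hγ0.le
  rw [forall_mem_Icc_zero_one_iff]
  refine and_congr ?_
    (and_congr (forall₃_congr fun η hη h1 => ?_) (forall₃_congr fun η h0 hη => ?_))
  · rw [key _ ⟨by norm_num, by norm_num⟩, setOf_Hg_min_lt_innerRisk_advLoss_eq hγ0.le hgmono
      fun w b => half_lt_two_event_risk_iff (hAB _ b)]
  · rw [key η ⟨by linarith, h1⟩, setOf_Hg_min_lt_innerRisk_advLoss_eq hγ0.le hgmono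
      fun w b => min_lt_two_event_risk_iff_of_half_lt (hAB _ b) hη]
  · rw [key η ⟨h0, by linarith⟩, setOf_Hg_min_lt_innerRisk_advLoss_eq hγ0.le hgmono
      fun w b => min_lt_two_event_risk_iff_of_lt_half (hAB _ b) hη]

theorem stmt18 (d : ℕ) (hd : 1 ≤ d) (γ : ℝ) (hγ0 : 0 < γ) (hγ1 : γ < 1)
    (g : ℝ → ℝ) (hgmono : Monotone g) (hgcont : Continuous g)
    (G : ℝ) (hG : 0 ≤ G) (hg1 : 0 < g (-1 - γ) + G) (hg2 : g (1 + γ) - G < 0)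
    (ℓ : Loss d) (hl : ∀ (f : EuclideanSpace ℝ (Fin d) → ℝ) (x : EuclideanSpace ℝ (Fin d)), ‖x‖ ≤ 1 → ∀ y : ℝ, y = 1 ∨ y = -1 → 0 ≤ ℓ f x y) :
    Calibrated (Hg d g G) ℓ (advLoss γ) ↔
      ∀ x : EuclideanSpace ℝ (Fin d), ‖x‖ ≤ 1 →
        (infRiskE ℓ (Hg d g G) x (1/2) <
          infRiskE ℓ { f | ∃ (w : EuclideanSpace ℝ (Fin d)) (b : ℝ),
            ‖w‖ = 1 ∧ |b| ≤ G ∧ f = (fun x' => g (inner ℝ w x' : ℝ) + b) ∧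
            g ((inner ℝ w x : ℝ) - γ) + b ≤ 0 ∧ 0 ≤ g ((inner ℝ w x : ℝ) + γ) + b } x (1/2)) ∧
        (∀ η : ℝ, 1/2 < η → η ≤ 1 →
          infRiskE ℓ (Hg d g G) x η <
            infRiskE ℓ { f | ∃ (w : EuclideanSpace ℝ (Fin d)) (b : ℝ),
              ‖w‖ = 1 ∧ |b| ≤ G ∧ f = (fun x' => g (inner ℝ w x' : ℝ) + b) ∧
              g ((inner ℝ w x : ℝ) - γ) + b ≤ 0 } x η) ∧
        (∀ η : ℝ, 0 ≤ η → η < 1/2 →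
          infRiskE ℓ (Hg d g G) x η <
            infRiskE ℓ { f | ∃ (w : EuclideanSpace ℝ (Fin d)) (b : ℝ),
              ‖w‖ = 1 ∧ |b| ≤ G ∧ f = (fun x' => g (inner ℝ w x' : ℝ) + b) ∧
              0 ≤ g ((inner ℝ w x : ℝ) + γ) + b } x η) :=
  stmt18_general d hd γ hγ0 g hgmono G hG hg1 hg2 ℓ hl
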